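/- arXiv:2509.00279 — 2 statements merged into one kernel-verified Lean document; each statement's English description precedes it below -/
import Mathlib

section
/- Connectivity of Laguerre cells under geodesic costs: let d : X × X → ℝ and c : X × S → ℝ, and suppose x, y ∈ X and i ∈ S satisfy c(x,i) = d(x,y) + c(y,i) (y lies on a shortest path from x to i) and c(x,j) ≤ d(x,y) + c(y,j) for all j ∈ S (the triangle inequality for the shortest-path cost). Then for any ψ ∈ ℝ^S, if x ∈ Lag_i(ψ) then y ∈ Lag_i(ψ). -/
open Set

/-- The generalized Laguerre cell of endpoint `i` for the dual vector `ψ`. -/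
def Lag {X : Type*} {ι : Type*} (c : X → ι → ℝ) (ψ : ι → ℝ) (i : ι) : Set X :=
  {x | ∀ j, c x i - ψ i ≤ c x j - ψ j}

/-- Connectivity of Laguerre cells under geodesic (shortest-path) costs: if `y` lies on
a shortest path from `x` to endpoint `i` and the shortest-path cost satisfies the
triangle inequality through `y`, then `x ∈ Lag_i(ψ)` implies `y ∈ Lag_i(ψ)`. -/
theorem laguerre_cell_geodesic_connectivity
    {X : Type*} {ι : Type*} [Fintype ι] [Nonempty ι]
    (d : X → X → ℝ) (c : X → ι → ℝ) (x y : X) (i : ι)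
    (hgeo : c x i = d x y + c y i)
    (htri : ∀ j : ι, c x j ≤ d x y + c y j)
    (ψ : ι → ℝ) (hx : x ∈ Lag c ψ i) :
    y ∈ Lag c ψ i := by
  intro j
  have h1 := hx j
  have h2 := htri j
  simp only [Lag] at *
  linarith [hgeo]
end

section
/- Pushforward mass identity for argmin assignment maps: assume that for all distinct i,j ∈ S and all r ∈ ℝ the set {x ∈ X : c(x,i) − c(x,j) = r} has μ-measure zero. Let ψ ∈ ℝ^S and let T : X → S be any measurable map satisfying c(x, T(x)) − ψ_{T(x)} = min_{k∈S}(c(x,k) − ψ_k) for every x ∈ X (ties broken arbitrarily). Then μ(T⁻¹({i})) = μ(Lag_i(ψ)) for every i ∈ S. -/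
open MeasureTheory Set

/-- Pushforward mass identity for argmin assignment maps: if `T` assigns each point to
a minimizer of `c(x,·) − ψ`, then `μ(T⁻¹({i})) = μ(Lag_i(ψ))` for every `i`. -/
theorem argmin_map_mass_eq_laguerre_mass
    {X : Type*} [MetricSpace X] [CompactSpace X] [MeasurableSpace X] [BorelSpace X]
    (μ : Measure X) [IsFiniteMeasure μ]
    {ι : Type*} [Fintype ι] [Nonempty ι] [MeasurableSpace ι] [MeasurableSingletonClass ι]
    (c : X → ι → ℝ)
    (hc_lsc : ∀ i, LowerSemicontinuous fun x => c x i)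
    (hc_bdd : ∃ M : ℝ, ∀ x i, M ≤ c x i)
    (hnull : ∀ i j : ι, i ≠ j → ∀ r : ℝ, μ {x | c x i - c x j = r} = 0)
    (ψ : ι → ℝ) (T : X → ι) (hT_meas : Measurable T)
    (hT_min : ∀ x, c x (T x) - ψ (T x)
      = Finset.univ.inf' Finset.univ_nonempty (fun k => c x k - ψ k)) :
    ∀ i : ι, μ (T ⁻¹' {i}) = μ (Lag c ψ i) := by
  intro i
  have hsub : T ⁻¹' {i} ⊆ Lag c ψ i := by
    intro x hx
    have hxi : T x = i := hx
    intro j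
    rw [← hxi, hT_min x]
    exact Finset.inf'_le _ (Finset.mem_univ j)
  have hsub2 : Lag c ψ i ⊆ T ⁻¹' {i} ∪ ⋃ j ∈ {j : ι | j ≠ i}, {x | c x i - c x j = ψ i - ψ j} := by
    intro x hx
    by_cases h : T x = i
    · exact Or.inl h
    · right
      refine mem_iUnion₂.2 ⟨T x, h, ?_⟩
      have h1 : c x i - ψ i ≤ c x (T x) - ψ (T x) := hx (T x)
      have h2 : c x (T x) - ψ (T x) ≤ c x i - ψ i := by
        rw [hT_min x]; exact Finset.inf'_le _ (Finset.mem_univ i)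
      have : c x i - ψ i = c x (T x) - ψ (T x) := le_antisymm h1 h2
      simp only [mem_setOf_eq]; linarith
  refine le_antisymm (measure_mono hsub) ?_
  calc μ (Lag c ψ i) ≤ μ (T ⁻¹' {i} ∪ ⋃ j ∈ {j : ι | j ≠ i}, {x | c x i - c x j = ψ i - ψ j}) :=
        measure_mono hsub2
    _ ≤ μ (T ⁻¹' {i}) + μ (⋃ j ∈ {j : ι | j ≠ i}, {x | c x i - c x j = ψ i - ψ j}) :=
        measure_union_le _ _
    _ = μ (T ⁻¹' {i}) := by
        have : μ (⋃ j ∈ {j : ι | j ≠ i}, {x | c x i - c x j = ψ i - ψ j}) = 0 := by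
          refine measure_biUnion_null_iff ?_ |>.2 ?_
          · exact (Set.to_countable _)
          · intro j hj; exact hnull i j (Ne.symm hj) _
        rw [this, add_zero]
end
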